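/- arXiv:2507.02421 — 2 statements merged into one kernel-verified Lean document; each statement's English description precedes it below -/
import Mathlib

section
/- Let G be a finite simple graph on at least 2 vertices that is not a path (i.e., G is not isomorphic to the path graph P_n for any n). Then there exists a subset L_G ⊆ V(G) such that the graft (G, L_G) has a local complementation minor (G', L_{G'}) in which G' has at least two isolated vertices, neither of which belongs to L_{G'}. -/
open scoped Classical symmDiff

/-- Local complementation of a simple graph at a vertex `v`: toggle the adjacency
between every pair of distinct neighbours of `v`. -/
def SimpleGraph.localComp {V : Type*} (G : SimpleGraph V) (v : V) : SimpleGraph V where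
  Adj u w := u ≠ w ∧ (Xor' (G.Adj u w) (G.Adj v u ∧ G.Adj v w))
  symm := by
    refine ⟨?_⟩
    rintro u w ⟨h1, h2⟩
    refine ⟨h1.symm, ?_⟩
    rw [G.adj_comm w u, and_comm]
    exact h2
  loopless := ⟨fun u h => h.1 rfl⟩

/-- Local complementation deletion `G ⊟ v`, keeping the ambient vertex type
(the deleted vertex becomes isolated). -/
def SimpleGraph.lcdel {V : Type*} (G : SimpleGraph V) (v : V) : SimpleGraph V where
  Adj u w := u ≠ v ∧ w ≠ v ∧ (G.localComp v).Adj u w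
  symm := ⟨fun u w h => ⟨h.2.1, h.1, (G.localComp v).symm.symm _ _ h.2.2⟩⟩
  loopless := ⟨fun u h => (G.localComp v).loopless.irrefl u h.2.2⟩

/-- A graft: a simple graph whose edges lie inside a finite support, together with
a marked set of vertices `L ⊆ support`. -/
structure Graft (V : Type*) where
  support : Finset V
  G : SimpleGraph V
  edge_mem : ∀ ⦃u w : V⦄, G.Adj u w → u ∈ support
  L : Finset V
  L_sub : L ⊆ support

variable {V : Type*} [Fintype V] [DecidableEq V]

/-- Local complementation deletion of a graft at a vertex:
`(G, L) ⊟ v = (G ⊟ v, (L \ {v}) ∆ N_G(v))`. -/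
noncomputable def Graft.lcd (Γ : Graft V) (v : V) : Graft V where
  support := Γ.support.erase v
  G := Γ.G.lcdel v
  edge_mem := by
    intro u w h
    obtain ⟨hu, hw, hne, hx⟩ := (h : u ≠ v ∧ w ≠ v ∧ u ≠ w ∧
      Xor' (Γ.G.Adj u w) (Γ.G.Adj v u ∧ Γ.G.Adj v w))
    refine Finset.mem_erase.mpr ⟨hu, ?_⟩
    rcases (hx : (Γ.G.Adj u w ∧ ¬(Γ.G.Adj v u ∧ Γ.G.Adj v w)) ∨
        ((Γ.G.Adj v u ∧ Γ.G.Adj v w) ∧ ¬Γ.G.Adj u w)) with ⟨ha, -⟩ | ⟨⟨hv1, -⟩, -⟩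
    · exact Γ.edge_mem ha
    · exact Γ.edge_mem (Γ.G.symm.symm _ _ hv1)
  L := (Γ.L.erase v) ∆ (Finset.univ.filter fun u => Γ.G.Adj v u)
  L_sub := by
    intro u hu
    rw [Finset.mem_symmDiff] at hu
    refine Finset.mem_erase.mpr ?_
    rcases hu with ⟨h1, -⟩ | ⟨h2, -⟩
    · exact ⟨(Finset.mem_erase.mp h1).1, Γ.L_sub (Finset.mem_erase.mp h1).2⟩
    · have hadj : Γ.G.Adj v u := (Finset.mem_filter.mp h2).2
      exact ⟨fun h => Γ.G.loopless.irrefl v (h ▸ hadj), Γ.edge_mem (Γ.G.symm.symm _ _ hadj)⟩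

/-- `Δ` is a local complementation minor of `Γ`: it is obtained from `Γ` by a
finite sequence of local complementation deletions, each performed at a vertex
of the current mark set. -/
inductive Graft.IsLCMinor : Graft V → Graft V → Prop
  | refl (Γ : Graft V) : Graft.IsLCMinor Γ Γ
  | step {Γ Δ : Graft V} (v : V) (hv : v ∈ Γ.L) :
      Graft.IsLCMinor (Γ.lcd v) Δ → Graft.IsLCMinor Γ Δ

/-- The adjacency matrix over GF(2) of a graft, indexed by its support. -/
noncomputable def Graft.matrix (Γ : Graft V) :
    Matrix Γ.support Γ.support (ZMod 2) := fun u w =>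
  if (u : V) = (w : V) then (if (u : V) ∈ Γ.L then 1 else 0)
  else (if Γ.G.Adj (u : V) (w : V) then 1 else 0)

/-- The corank over GF(2) of the adjacency matrix of a graft. -/
noncomputable def Graft.corank (Γ : Graft V) : ℕ :=
  Γ.support.card - Γ.matrix.rank

/-!
Marks can be chosen in hindsight: marks `L'` on `(G, L) ⊟ v` are reached from
`L = insert v (L' ∆ N(v))`. So it suffices to delete the vertices of the graph one at a time by
local complementation until two isolated vertices remain.

A graph on at least two vertices is not a path exactly when it is disconnected, has a vertex of
degree at least three, or has minimum degree at least two. While at least three vertices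
remain, some `G ⊟ v` again has one of these obstructions: delete a vertex outside a
disconnected pair, or a non-neighbour of a vertex of degree three, or a vertex having an
adjacent twin, which then becomes isolated; the cases left over are stars, whose centre pivots
to a complete graph, and chordless cycles, which shrink. On two vertices the only possible
obstruction is disconnectedness, that is, two isolated vertices.
-/

namespace SimpleGraph

section LocalComplementation

variable {V : Type*} {G : SimpleGraph V} {u v w a : V}

theorem lcdel_adj : (G.lcdel v).Adj u w ↔
    u ≠ v ∧ w ≠ v ∧ u ≠ w ∧ Xor (G.Adj u w) (G.Adj v u ∧ G.Adj v w) :=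
  Iff.rfl

theorem lcdel_adj_of_not_adj (huv : u ≠ v) (hvu : ¬ G.Adj v u) :
    (G.lcdel v).Adj u w ↔ G.Adj u w := by
  refine ⟨fun h => ?_, fun h => ⟨huv, fun hwv => hvu (hwv ▸ h.symm), h.ne,
    Or.inl ⟨h, fun h' => hvu h'.1⟩⟩⟩
  rcases (lcdel_adj.mp h).2.2.2 with ⟨h, -⟩ | ⟨⟨h, -⟩, -⟩
  exacts [h, absurd h hvu]

theorem lcdel_adj_of_adj (hvu : G.Adj v u) :
    (G.lcdel v).Adj u w ↔ w ≠ v ∧ w ≠ u ∧ (G.Adj u w ↔ ¬ G.Adj v w) := by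
  simp only [lcdel_adj, hvu, true_and, ne_eq, hvu.ne', not_false_eq_true, xor_iff_iff_not,
    eq_comm (a := u)]

theorem lcdel_adj_of_adj_of_adj (hvu : G.Adj v u) (hvw : G.Adj v w) (huw : u ≠ w) :
    (G.lcdel v).Adj u w ↔ ¬ G.Adj u w := by
  simp [lcdel_adj_of_adj hvu, hvw, hvw.ne', huw.symm]

theorem lcdel_not_adj_of_twin (hva : G.Adj v a)
    (htwin : ∀ w, w ≠ v → w ≠ a → (G.Adj a w ↔ G.Adj v w)) (w : V) :
    ¬ (G.lcdel v).Adj a w := by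
  rw [lcdel_adj_of_adj hva]
  rintro ⟨hwv, hwa, h⟩
  rw [htwin w hwv hwa] at h
  exact (iff_not_self h).elim

theorem reachable_of_lcdel_adj (h : (G.lcdel v).Adj u w) : G.Reachable u w := by
  rcases (lcdel_adj.mp h).2.2.2 with ⟨h, -⟩ | ⟨⟨hvu, hvw⟩, -⟩
  exacts [h.reachable, hvu.reachable.symm.trans hvw.reachable]

theorem Reachable.of_lcdel (h : (G.lcdel v).Reachable u w) : G.Reachable u w := by
  obtain ⟨p⟩ := h
  induction p with
  | nil => rfl
  | cons h _ ih => exact (reachable_of_lcdel_adj h).trans ih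

theorem not_reachable_of_forall_not_adj (ha : ∀ w, ¬ G.Adj a w) (haw : a ≠ w) :
    ¬ G.Reachable a w := by
  rintro ⟨_ | ⟨h, _⟩⟩
  exacts [haw rfl, ha _ h]

theorem mem_of_reachable {C : Set V} (hC : ∀ u w, G.Adj u w → u ∈ C → w ∈ C) (hu : u ∈ C)
    (h : G.Reachable u w) : w ∈ C := by
  obtain ⟨p⟩ := h
  induction p with
  | nil => exact hu
  | cons h _ ih => exact ih (hC _ _ h hu)

end LocalComplementation

section Degree

variable {V : Type*} [Fintype V] {G : SimpleGraph V} {A : Finset V} {u v w a b : V}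

theorem degree_lt_card_of_forall_adj_mem (hG : ∀ ⦃u w⦄, G.Adj u w → u ∈ A) (hv : v ∈ A) :
    G.degree v < A.card := by
  classical
  have hsub : G.neighborFinset v ⊆ A.erase v := fun w hw => by
    rw [mem_neighborFinset] at hw
    exact Finset.mem_erase.mpr ⟨hw.ne', hG hw.symm⟩
  have := Finset.card_le_card hsub
  rw [Finset.card_erase_of_mem hv, card_neighborFinset_eq_degree] at this
  have := Finset.card_pos.mpr ⟨v, hv⟩
  omega

theorem mem_of_degree_pos (hG : ∀ ⦃u w⦄, G.Adj u w → u ∈ A) (hv : 0 < G.degree v) : v ∈ A :=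
  let ⟨_, hw⟩ := G.degree_pos_iff_exists_adj v |>.mp hv
  hG hw

theorem eq_or_eq_of_degree_le_two (hv : G.degree v ≤ 2) (hva : G.Adj v a) (hvb : G.Adj v b)
    (hab : a ≠ b) (hvw : G.Adj v w) : w = a ∨ w = b := by
  classical
  by_contra! h
  have hsub : ({w, a, b} : Finset V) ⊆ G.neighborFinset v := by
    simp [Finset.insert_subset_iff, hva, hvb, hvw]
  have := Finset.card_le_card hsub
  rw [Finset.card_insert_of_notMem (by simp [h.1, h.2]), Finset.card_pair hab,
    card_neighborFinset_eq_degree] at this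
  omega

theorem neighborFinset_lcdel_of_not_adj (huv : u ≠ v) (hvu : ¬ G.Adj v u) :
    (G.lcdel v).neighborFinset u = G.neighborFinset u := by
  ext w
  simp only [mem_neighborFinset, lcdel_adj_of_not_adj huv hvu]

theorem degree_lcdel_of_not_adj (huv : u ≠ v) (hvu : ¬ G.Adj v u) :
    (G.lcdel v).degree u = G.degree u := by
  rw [← card_neighborFinset_eq_degree, ← card_neighborFinset_eq_degree,
    neighborFinset_lcdel_of_not_adj huv hvu]

/-- `a` trades its edge to `v` for an edge to `b`. -/
theorem two_le_degree_lcdel (hva : G.Adj v a) (hvb : G.Adj v b) (hab : a ≠ b)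
    (hnab : ¬ G.Adj a b) (hv : ∀ w, G.Adj v w → w = a ∨ w = b) (ha : 2 ≤ G.degree a) :
    2 ≤ (G.lcdel v).degree a := by
  classical
  obtain ⟨c, hc, hcv⟩ := Finset.exists_mem_ne (ha.trans_lt' one_lt_two) v
  rw [mem_neighborFinset] at hc
  have hcb : c ≠ b := fun h => hnab (h ▸ hc)
  have hvc : ¬ G.Adj v c := fun h => (hv c h).elim hc.ne' hcb
  have hsub : ({b, c} : Finset V) ⊆ (G.lcdel v).neighborFinset a := by
    simp only [Finset.insert_subset_iff, Finset.singleton_subset_iff, mem_neighborFinset,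
      lcdel_adj_of_adj_of_adj hva hvb hab, lcdel_adj_of_adj hva]
    exact ⟨hnab, hcv, hc.ne', iff_of_true hc hvc⟩
  simpa [Finset.card_pair hcb.symm] using Finset.card_le_card hsub

theorem degree_deleteIncidenceSet_lt [DecidableRel G.Adj] (hvu : G.Adj v u) :
    (G.deleteIncidenceSet v).degree u < G.degree u := by
  classical
  have hsub : (G.deleteIncidenceSet v).neighborFinset u ⊆ (G.neighborFinset u).erase v :=
    fun w hw => by
      obtain ⟨huw, -, hwv⟩ := deleteIncidenceSet_adj.mp ((mem_neighborFinset _ _ _).mp hw)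
      exact Finset.mem_erase.mpr ⟨hwv, (mem_neighborFinset _ _ _).mpr huw⟩
  have := Finset.card_le_card hsub
  rw [Finset.card_erase_of_mem ((mem_neighborFinset _ _ _).mpr hvu.symm),
    card_neighborFinset_eq_degree, card_neighborFinset_eq_degree] at this
  have := G.degree_pos_iff_exists_adj u |>.mpr ⟨v, hvu.symm⟩
  omega

end Degree

section PathObstruction

variable {V : Type*} [Fintype V] [DecidableEq V] {G : SimpleGraph V} {A : Finset V}
  {u v a q : V}

/-- Reasons why `G`, whose edges lie in `A`, is not a path on the vertex set `A`. -/
def PathObstruction (G : SimpleGraph V) (A : Finset V) : Prop :=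
  (∃ p ∈ A, ∃ q ∈ A, ¬ G.Reachable p q) ∨ (∃ u, 3 ≤ G.degree u) ∨
    (A.Nonempty ∧ ∀ v ∈ A, 2 ≤ G.degree v)

theorem pathObstruction_lcdel_of_twin (hva : G.Adj v a)
    (htwin : ∀ w, w ≠ v → w ≠ a → (G.Adj a w ↔ G.Adj v w)) (ha : a ∈ A) (hq : q ∈ A)
    (hqv : q ≠ v) (hqa : q ≠ a) : (G.lcdel v).PathObstruction (A.erase v) :=
  Or.inl ⟨a, Finset.mem_erase.mpr ⟨hva.ne', ha⟩, q, Finset.mem_erase.mpr ⟨hqv, hq⟩,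
    not_reachable_of_forall_not_adj (lcdel_not_adj_of_twin hva htwin) hqa.symm⟩

theorem exists_lcdel_pathObstruction_of_not_reachable {p : V} (hp : p ∈ A) (hq : q ∈ A)
    (hpq : ¬ G.Reachable p q) (hA : 3 ≤ A.card) :
    ∃ v ∈ A, (G.lcdel v).PathObstruction (A.erase v) := by
  obtain ⟨v, hv, hvpq⟩ := Finset.exists_mem_notMem_of_card_lt_card
    ((Finset.card_le_two (a := p) (b := q)).trans_lt hA)
  simp only [Finset.mem_insert, Finset.mem_singleton, not_or] at hvpq
  exact ⟨v, hv, Or.inl ⟨p, Finset.mem_erase.mpr ⟨Ne.symm hvpq.1, hp⟩, q,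
    Finset.mem_erase.mpr ⟨Ne.symm hvpq.2, hq⟩, fun h => hpq h.of_lcdel⟩⟩

/-- Pivoting at the centre of a star leaves a complete graph. -/
theorem pathObstruction_lcdel_of_star (huA : u ∈ A) (hu : ∀ x ∈ A, x ≠ u → G.Adj u x)
    (hstar : ∀ x y, G.Adj x y → x = u ∨ y = u) (hA : 4 ≤ A.card) :
    (G.lcdel u).PathObstruction (A.erase u) := by
  have hA' : 3 ≤ (A.erase u).card := by rw [Finset.card_erase_of_mem huA]; omega
  refine Or.inr (Or.inr ⟨Finset.card_pos.mp (by omega), fun x hx => ?_⟩)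
  obtain ⟨hxu, hxA⟩ := Finset.mem_erase.mp hx
  have hsub : (A.erase u).erase x ⊆ (G.lcdel u).neighborFinset x := fun y hy => by
    obtain ⟨hyx, hyu, hyA⟩ := by simpa using hy
    rw [mem_neighborFinset,
      lcdel_adj_of_adj_of_adj (hu x hxA hxu) (hu y hyA hyu) (Ne.symm hyx)]
    exact fun hxy => (hstar x y hxy).elim hxu hyu
  have := Finset.card_le_card hsub
  rw [Finset.card_erase_of_mem hx, card_neighborFinset_eq_degree] at this
  omega

theorem exists_lcdel_pathObstruction_of_forall_adj (hG : ∀ ⦃u w⦄, G.Adj u w → u ∈ A)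
    (huniv : ∀ u v, 3 ≤ G.degree u → v ∈ A → v ≠ u → G.Adj u v) (hu : 3 ≤ G.degree u) :
    ∃ v ∈ A, (G.lcdel v).PathObstruction (A.erase v) := by
  have huA := mem_of_degree_pos hG (by omega : 0 < G.degree u)
  have hA := degree_lt_card_of_forall_adj_mem hG huA
  by_cases hb : ∃ b ≠ u, 3 ≤ G.degree b
  · -- two universal vertices are adjacent twins
    obtain ⟨b, hbu, hb⟩ := hb
    have hbA := mem_of_degree_pos hG (by omega : 0 < G.degree b)
    obtain ⟨q, hqA, hq⟩ := Finset.exists_mem_notMem_of_card_lt_card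
      ((Finset.card_le_two (a := u) (b := b)).trans_lt (show 2 < A.card by omega))
    simp only [Finset.mem_insert, Finset.mem_singleton, not_or] at hq
    refine ⟨u, huA, pathObstruction_lcdel_of_twin (huniv u b hu hbA hbu)
      (fun w hwu hwb => ?_) hbA hqA hq.1 hq.2⟩
    by_cases hwA : w ∈ A
    · exact iff_of_true (huniv b w hb hwA hwb) (huniv u w hu hwA hwu)
    · exact iff_of_false (fun h => hwA (hG h.symm)) (fun h => hwA (hG h.symm))
  push Not at hb
  by_cases he : ∃ a b, G.Adj a b ∧ a ≠ u ∧ b ≠ u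
  · -- an edge `ab` avoiding `u` spans a triangle `uab` in which `a` and `b` are twins
    obtain ⟨a, b, hab, hau, hbu⟩ := he
    have hN : ∀ x y, G.Adj x y → x ≠ u → y ≠ u → ∀ w, w ≠ y → (G.Adj x w ↔ w = u) := by
      intro x y hxy hxu hyu w hwy
      have hux := huniv u x hu (hG hxy) hxu
      refine ⟨fun hxw => ?_, fun hwu => hwu ▸ hux.symm⟩
      exact (eq_or_eq_of_degree_le_two (by have := hb x hxu; omega) hux.symm hxy
        hyu.symm hxw).resolve_right hwy
    refine ⟨a, hG hab, pathObstruction_lcdel_of_twin hab (fun w hwa hwb => ?_)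
      (hG hab.symm) huA hau.symm hbu.symm⟩
    rw [hN a b hab hau hbu w hwb, hN b a hab.symm hbu hau w hwa]
  push Not at he
  refine ⟨u, huA, pathObstruction_lcdel_of_star huA (fun x hx hxu => huniv u x hu hx hxu)
    (fun x y hxy => ?_) (by omega)⟩
  by_contra! h
  exact h.2 (he x y hxy h.1)

theorem exists_lcdel_pathObstruction_of_three_le_degree (hG : ∀ ⦃u w⦄, G.Adj u w → u ∈ A)
    (hu : 3 ≤ G.degree u) : ∃ v ∈ A, (G.lcdel v).PathObstruction (A.erase v) := by
  by_cases hnu : ∃ u v, 3 ≤ G.degree u ∧ v ∈ A ∧ v ≠ u ∧ ¬ G.Adj u v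
  · obtain ⟨u, v, hu, hv, hvu, huv⟩ := hnu
    refine ⟨v, hv, Or.inr (Or.inl ⟨u, ?_⟩)⟩
    rwa [degree_lcdel_of_not_adj hvu.symm fun h => huv h.symm]
  push Not at hnu
  exact exists_lcdel_pathObstruction_of_forall_adj hG hnu hu

theorem exists_lcdel_pathObstruction_of_two_regular (hG : ∀ ⦃u w⦄, G.Adj u w → u ∈ A)
    (hdeg : ∀ x, G.degree x ≤ 2) (hmin : ∀ x ∈ A, 2 ≤ G.degree x) (hne : A.Nonempty) :
    ∃ v ∈ A, (G.lcdel v).PathObstruction (A.erase v) := by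
  obtain ⟨v, hv⟩ := hne
  obtain ⟨a, b, hab, hN⟩ := Finset.card_eq_two.mp
    ((card_neighborFinset_eq_degree G v).trans ((hdeg v).antisymm (hmin v hv)))
  have hvN : ∀ w, G.Adj v w ↔ w = a ∨ w = b := fun w => by
    rw [← mem_neighborFinset, hN, Finset.mem_insert, Finset.mem_singleton]
  have hva : G.Adj v a := (hvN a).mpr (Or.inl rfl)
  have hvb : G.Adj v b := (hvN b).mpr (Or.inr rfl)
  refine ⟨v, hv, ?_⟩
  by_cases hadj : G.Adj a b
  · -- a triangle `vab`, in which `v` and `a` are twins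
    refine pathObstruction_lcdel_of_twin hva (fun w hwv hwa => ?_) (hG hva.symm)
      (hG hvb.symm) hvb.ne' hab.symm
    rw [hvN, or_iff_right hwa]
    refine ⟨fun haw => ?_, fun hwb => hwb ▸ hadj⟩
    exact (eq_or_eq_of_degree_le_two (hdeg a) hva.symm hadj hvb.ne haw).resolve_left hwv
  · -- an induced path `a - v - b`, which pivoting at `v` closes up again
    have haA : a ∈ A := hG hva.symm
    refine Or.inr (Or.inr ⟨⟨a, Finset.mem_erase.mpr ⟨hva.ne', haA⟩⟩, fun x hx => ?_⟩)
    obtain ⟨hxv, hxA⟩ := Finset.mem_erase.mp hx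
    by_cases hxa : x = a
    · exact hxa ▸ two_le_degree_lcdel hva hvb hab hadj (fun w => (hvN w).mp) (hmin a haA)
    by_cases hxb : x = b
    · exact hxb ▸ two_le_degree_lcdel hvb hva hab.symm (fun h => hadj h.symm)
        (fun w h => ((hvN w).mp h).symm) (hmin b (hG hvb.symm))
    rw [degree_lcdel_of_not_adj hxv fun h => ((hvN x).mp h).elim hxa hxb]
    exact hmin x hxA

theorem PathObstruction.exists_lcdel (hG : ∀ ⦃u w⦄, G.Adj u w → u ∈ A)
    (h : G.PathObstruction A) (hA : 3 ≤ A.card) :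
    ∃ v ∈ A, (G.lcdel v).PathObstruction (A.erase v) := by
  rcases h with ⟨p, hp, q, hq, hpq⟩ | ⟨u, hu⟩ | ⟨hne, hmin⟩
  · exact exists_lcdel_pathObstruction_of_not_reachable hp hq hpq hA
  · exact exists_lcdel_pathObstruction_of_three_le_degree hG hu
  by_cases h3 : ∃ u, 3 ≤ G.degree u
  · obtain ⟨u, hu⟩ := h3
    exact exists_lcdel_pathObstruction_of_three_le_degree hG hu
  push Not at h3
  exact exists_lcdel_pathObstruction_of_two_regular hG (fun x => by have := h3 x; omega) hmin hne

theorem PathObstruction.exists_not_reachable (hG : ∀ ⦃u w⦄, G.Adj u w → u ∈ A)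
    (h : G.PathObstruction A) (hA : A.card ≤ 2) : ∃ p ∈ A, ∃ q ∈ A, ¬ G.Reachable p q := by
  rcases h with h | ⟨u, hu⟩ | ⟨⟨v, hv⟩, hmin⟩
  · exact h
  · have := degree_lt_card_of_forall_adj_mem hG (mem_of_degree_pos hG (by omega : 0 < G.degree u))
    omega
  · have := degree_lt_card_of_forall_adj_mem hG hv
    have := hmin v hv
    omega

end PathObstruction

section PathGraph

variable {V : Type*} {G : SimpleGraph V} {x y : V}

theorem exists_pathGraph_embedding_cons {n : ℕ} (hxy : G.Adj x y)
    (hx : ∀ w, G.Adj x w → w = y) (f : pathGraph (n + 1) ↪g G.deleteIncidenceSet x)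
    (hf0 : f 0 = y) (hf : ∀ i w, (G.deleteIncidenceSet x).Adj (f i) w → w ∈ Set.range f) :
    ∃ g : pathGraph (n + 2) ↪g G, g 0 = x ∧ ∀ i w, G.Adj (g i) w → w ∈ Set.range g := by
  have hfx : ∀ i, f i ≠ x := by
    intro i hi
    cases i using Fin.cases with
    | zero => exact hxy.ne (hi ▸ hf0)
    | succ j =>
      have := f.map_rel_iff.mpr (pathGraph_adj.mpr (.inl rfl) :
        (pathGraph (n + 1)).Adj j.castSucc j.succ)
      exact (deleteIncidenceSet_adj.mp this).2.2 hi
  have hfG : ∀ i w, G.Adj (f i) w → w = x ∨ w ∈ Set.range f := fun i w h =>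
    (eq_or_ne w x).imp_right fun hwx => hf i w (deleteIncidenceSet_adj.mpr ⟨h, hfx i, hwx⟩)
  have hxf : ∀ j, G.Adj x (f j) ↔ j = 0 :=
    fun j => ⟨fun h => f.injective ((hx _ h).trans hf0.symm), fun h => h ▸ hf0 ▸ hxy⟩
  have hff : ∀ i j, G.Adj (f i) (f j) ↔ (pathGraph (n + 1)).Adj i j := fun i j => by
    rw [← f.map_rel_iff, deleteIncidenceSet_adj]
    exact (and_iff_left ⟨hfx i, hfx j⟩).symm
  let g : Fin (n + 2) → V := Fin.cons x f
  have hadj : ∀ i j, G.Adj (g i) (g j) ↔ (pathGraph (n + 2)).Adj i j := by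
    intro i j
    cases i using Fin.cases <;> cases j using Fin.cases <;>
      simp only [g, Fin.cons_zero, Fin.cons_succ, G.adj_comm (f _) x, hxf, hff, pathGraph_adj,
        Fin.val_zero, Fin.val_succ, SimpleGraph.irrefl, Fin.ext_iff] <;> omega
  have hinj : Function.Injective g :=
    Fin.cons_injective_iff.mpr ⟨fun ⟨i, hi⟩ => hfx i hi, f.injective⟩
  refine ⟨⟨⟨g, hinj⟩, hadj _ _⟩, rfl, fun i w h => ?_⟩
  cases i using Fin.cases with
  | zero => exact ⟨Fin.succ 0, by simp [g, hf0, hx w h]⟩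
  | succ i =>
    rcases hfG i w h with rfl | ⟨j, rfl⟩
    exacts [⟨0, rfl⟩, ⟨j.succ, rfl⟩]

variable [Fintype V]

theorem exists_pathGraph_embedding [DecidableRel G.Adj] (hdeg : ∀ v, G.degree v ≤ 2)
    (hx : G.degree x ≤ 1) :
    ∃ (n : ℕ) (f : pathGraph (n + 1) ↪g G), f 0 = x ∧
      ∀ i w, G.Adj (f i) w → w ∈ Set.range f := by
  classical
  induction hm : G.edgeFinset.card using Nat.strong_induction_on generalizing G x with
  | _ m ih =>
  rcases Nat.lt_or_ge (G.degree x) 1 with h0 | h1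
  · have hiso : ∀ w, ¬ G.Adj x w := fun w hw =>
      (G.degree_pos_iff_exists_adj x).mpr ⟨w, hw⟩ |>.ne' (by omega)
    refine ⟨0, ⟨⟨fun _ => x, fun i j _ => Fin.ext (by omega)⟩, fun {i j} => ?_⟩, rfl,
      fun _ w h => (hiso w h).elim⟩
    show G.Adj x x ↔ _
    simp only [SimpleGraph.irrefl, false_iff, pathGraph_adj]
    omega
  obtain ⟨y, hNx⟩ := Finset.card_eq_one.mp
    ((card_neighborFinset_eq_degree G x).trans (hx.antisymm h1))
  have hxN : ∀ w, G.Adj x w ↔ w = y := fun w => by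
    rw [← mem_neighborFinset, hNx, Finset.mem_singleton]
  have hxy : G.Adj x y := (hxN y).mpr rfl
  have hm' : (G.deleteIncidenceSet x).edgeFinset.card < m := by
    have hpos : 0 < G.edgeFinset.card := Finset.card_pos.mpr ⟨s(x, y), mem_edgeFinset.mpr hxy⟩
    rw [← hm, card_edgeFinset_deleteIncidenceSet]
    omega
  have hy : (G.deleteIncidenceSet x).degree y ≤ 1 := by
    have := degree_deleteIncidenceSet_lt hxy
    have := hdeg y
    omega
  obtain ⟨n, f, hf0, hf⟩ := ih _ hm'
    (fun v => (degree_le_of_le (G.deleteIncidenceSet_le x)).trans (hdeg v)) hy rfl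
  obtain ⟨g, hg⟩ := exists_pathGraph_embedding_cons hxy (fun w => (hxN w).mp) f hf0 hf
  exact ⟨n + 1, g, hg⟩

theorem exists_iso_pathGraph [DecidableRel G.Adj] (hconn : G.Preconnected)
    (hdeg : ∀ v, G.degree v ≤ 2) (hx : G.degree x ≤ 1) : ∃ n, Nonempty (G ≃g pathGraph n) := by
  obtain ⟨n, f, hf0, hf⟩ := exists_pathGraph_embedding hdeg hx
  have hsurj : Function.Surjective f := fun w =>
    mem_of_reachable (C := Set.range f) (fun _ _ h ⟨i, hi⟩ => hf i _ (hi ▸ h)) ⟨0, hf0⟩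
      (hconn x w)
  exact ⟨n + 1, ⟨(RelIso.ofSurjective f hsurj).symm⟩⟩

theorem pathObstruction_univ_of_not_iso_pathGraph [Nonempty V]
    (h : ¬ ∃ n, Nonempty (G ≃g pathGraph n)) : G.PathObstruction Finset.univ := by
  by_contra hG
  unfold PathObstruction at hG
  push Not at hG
  obtain ⟨hconn, hdeg, hmin⟩ := hG
  obtain ⟨x, -, hx⟩ := hmin Finset.univ_nonempty
  exact h (exists_iso_pathGraph (fun p q => hconn p (Finset.mem_univ p) q (Finset.mem_univ q))
    (fun v => by have := hdeg v; omega) (by omega : G.degree x ≤ 1))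

end PathGraph

end SimpleGraph

namespace Graft

variable {Γ : Graft V} {v p q : V}

def withMarks (Γ : Graft V) (L : Finset V) (hL : L ⊆ Γ.support) : Graft V :=
  { Γ with L := L, L_sub := hL }

def HasTwoIsolatedUnmarked (Δ : Graft V) : Prop :=
  ∃ a b : V, a ∈ Δ.support ∧ b ∈ Δ.support ∧ a ≠ b ∧
    (∀ w, ¬ Δ.G.Adj a w) ∧ (∀ w, ¬ Δ.G.Adj b w) ∧ a ∉ Δ.L ∧ b ∉ Δ.L

def CanIsolateTwo (Γ : Graft V) : Prop :=
  ∃ (L : Finset V) (hL : L ⊆ Γ.support) (Δ : Graft V),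
    (Γ.withMarks L hL).IsLCMinor Δ ∧ Δ.HasTwoIsolatedUnmarked

theorem exists_lcd_withMarks_eq (hv : v ∈ Γ.support) (L' : Finset V)
    (hL' : L' ⊆ (Γ.lcd v).support) :
    ∃ (L : Finset V) (hL : L ⊆ Γ.support), v ∈ L ∧
      (Γ.withMarks L hL).lcd v = (Γ.lcd v).withMarks L' hL' := by
  set N := Finset.univ.filter (Γ.G.Adj v ·)
  have hN : N ⊆ Γ.support := fun w hw => Γ.edge_mem (Finset.mem_filter.mp hw).2.symm
  have hvL' : v ∉ L' ∆ N := by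
    have : v ∉ L' := fun h => (Finset.mem_erase.mp (hL' h)).1 rfl
    rw [Finset.mem_symmDiff]
    exact fun h => h.elim (fun h => this h.1) fun h => (Finset.mem_filter.mp h.1).2.ne rfl
  refine ⟨insert v (L' ∆ N), Finset.insert_subset hv ?_, Finset.mem_insert_self v _, ?_⟩
  · exact Finset.symmDiff_subset_union.trans
      (Finset.union_subset (hL'.trans (Finset.erase_subset v _)) hN)
  · simp only [lcd, withMarks]
    congr 1
    rw [Finset.erase_insert hvL']
    exact symmDiff_symmDiff_cancel_right N L'

theorem CanIsolateTwo.of_lcd (hv : v ∈ Γ.support) (h : (Γ.lcd v).CanIsolateTwo) :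
    Γ.CanIsolateTwo := by
  obtain ⟨L', hL', Δ, hΔ, htwo⟩ := h
  obtain ⟨L, hL, hvL, heq⟩ := exists_lcd_withMarks_eq hv L' hL'
  exact ⟨L, hL, Δ, .step v hvL (heq ▸ hΔ), htwo⟩

theorem canIsolateTwo_of_not_reachable (hcard : Γ.support.card = 2) (hp : p ∈ Γ.support)
    (hq : q ∈ Γ.support) (hpq : ¬ Γ.G.Reachable p q) : Γ.CanIsolateTwo := by
  have hne : p ≠ q := fun h => hpq (h ▸ .refl p)
  have hsupp : Γ.support = {p, q} :=
    (Finset.eq_of_subset_of_card_le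
      (Finset.insert_subset hp (Finset.singleton_subset_iff.mpr hq))
      (by rw [hcard, Finset.card_pair hne])).symm
  have hiso : ∀ x ∈ ({p, q} : Finset V), ∀ w, ¬ Γ.G.Adj x w := by
    intro x hx w hxw
    have hw : w ∈ ({p, q} : Finset V) := hsupp ▸ Γ.edge_mem hxw.symm
    simp only [Finset.mem_insert, Finset.mem_singleton] at hx hw
    rcases hx with rfl | rfl <;> rcases hw with rfl | rfl
    exacts [hxw.ne rfl, hpq hxw.reachable, hpq hxw.reachable.symm, hxw.ne rfl]
  exact ⟨∅, Finset.empty_subset _, Γ.withMarks ∅ (Finset.empty_subset _), .refl _, p, q, hp, hq,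
    hne, hiso p (by simp), hiso q (by simp), Finset.notMem_empty p, Finset.notMem_empty q⟩

theorem canIsolateTwo_of_pathObstruction (Γ : Graft V) (h : Γ.G.PathObstruction Γ.support)
    (h2 : 2 ≤ Γ.support.card) : Γ.CanIsolateTwo := by
  induction hn : Γ.support.card using Nat.strong_induction_on generalizing Γ with
  | _ n ih =>
    rcases h2.eq_or_lt with h2 | h3
    · obtain ⟨p, hp, q, hq, hpq⟩ := h.exists_not_reachable Γ.edge_mem h2.ge
      exact canIsolateTwo_of_not_reachable h2.symm hp hq hpq
    · obtain ⟨v, hv, hv'⟩ := h.exists_lcdel Γ.edge_mem h3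
      have hcard : (Γ.lcd v).support.card = n - 1 := Finset.card_erase_of_mem hv ▸ hn ▸ rfl
      exact .of_lcd hv (ih _ (by omega) (Γ.lcd v) hv' (by omega) hcard)

end Graft

/-- Theorem 3.3: if `G` is a finite simple graph on at least two vertices that is
not a path (not isomorphic to any path graph `P_n`), then there is a mark set
`L` such that the graft `(G, L)` (on full support) has a local complementation
minor having at least two isolated vertices, neither of which is marked. -/
theorem exists_graft_lcMinor_two_isolated {V : Type*} [Fintype V] [DecidableEq V]
    (G : SimpleGraph V) (hcard : 2 ≤ Fintype.card V)
    (hnp : ¬ ∃ n, Nonempty (G ≃g SimpleGraph.pathGraph n)) :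
    ∃ (L : Finset V) (Δ : Graft V),
      (Graft.mk Finset.univ G (fun u _ _ => Finset.mem_univ u) L
        (Finset.subset_univ L)).IsLCMinor Δ ∧
      ∃ a b : V, a ∈ Δ.support ∧ b ∈ Δ.support ∧ a ≠ b ∧
        (∀ w, ¬ Δ.G.Adj a w) ∧ (∀ w, ¬ Δ.G.Adj b w) ∧ a ∉ Δ.L ∧ b ∉ Δ.L := by
  have : Nonempty V := Fintype.card_pos_iff.mp (by omega)
  obtain ⟨L, _, Δ, hΔ, htwo⟩ := Graft.canIsolateTwo_of_pathObstruction
    ⟨Finset.univ, G, fun u _ _ => Finset.mem_univ u, ∅, Finset.empty_subset _⟩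
    (SimpleGraph.pathObstruction_univ_of_not_iso_pathGraph hnp) (by simpa using hcard)
  exact ⟨L, Δ, hΔ, htwo⟩
end

section
/- Let G be a connected simple graph on n ≥ 4 vertices that contains a cycle, and let v be a vertex of G with exactly two neighbors a and b. If the local complementation deletion G ⊟ v is a path (isomorphic to some path graph), then a and b are adjacent in G (so that v, a, b form a triangle in G). -/
/-!
If `a` and `b` were not adjacent, local complementation at `v` would only add the edge `ab`, so
`G ⊟ v` would contain `G - v` together with the edge `ab`. A cycle of `G` avoiding `v` survives
in `G - v`; a cycle through `v` runs `a - v - b` and returns from `b` to `a` inside `G - v`, and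
the edge `ab` closes that return path into a cycle of `G ⊟ v`. Either way `G ⊟ v` has a cycle,
which a path graph does not.
-/

open scoped Classical

/-- Local complementation deletion `G ⊟ v := (G * v) \ v`: perform local
complementation at `v` and then delete the vertex `v`. -/
def SimpleGraph.lcdSub {V : Type*} (G : SimpleGraph V) (v : V) :
    SimpleGraph {u : V // u ≠ v} :=
  SimpleGraph.induce {u : V | u ≠ v} (G.localComp v)

namespace SimpleGraph

variable {V : Type*}

theorem pathGraph_isAcyclic (n : ℕ) : (pathGraph n).IsAcyclic := by
  refine isAcyclic_iff_forall_adj_isBridge.mpr fun i j hij ↦ ?_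
  wlog hlt : i < j generalizing i j
  · rw [Sym2.eq_swap]
    exact this j i hij.symm (hij.ne.symm.lt_or_gt.resolve_right hlt)
  rintro ⟨p⟩
  -- a walk from `i` to `j = i + 1` has to cross the cut `{k ≤ i}`, and only the edge `ij` does
  obtain ⟨d, -, hfst, hsnd⟩ := p.exists_boundary_dart {k | k ≤ i} (by simp) (by simpa)
  have hadj := d.adj
  simp only [deleteEdges_adj, Set.mem_singleton_iff, pathGraph_adj] at hadj hij
  simp only [Set.mem_ofPred_eq, not_le, Fin.le_def] at hfst hsnd
  refine hadj.2 (congrArg₂ (fun x y ↦ s(x, y)) (Fin.ext ?_) (Fin.ext ?_)) <;> omega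

namespace Walk

variable {G : SimpleGraph V} {s : Set V} {u w : V}

@[simp]
theorem isPath_induce_iff (p : G.Walk u w) (hp : ∀ x ∈ p.support, x ∈ s) :
    (p.induce s hp).IsPath ↔ p.IsPath := by
  simpa using (isPath_map_iff_of_injective (p := p.induce s hp)
    (f := (Embedding.induce s).toHom) (Embedding.induce (G := G) s).injective).symm

@[simp]
theorem isCycle_induce_iff (c : G.Walk u u) (hc : ∀ x ∈ c.support, x ∈ s) :
    (c.induce s hc).IsCycle ↔ c.IsCycle := by
  simpa using (isCycle_map_iff_of_injective (p := c.induce s hc)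
    (f := (Embedding.induce s).toHom) (Embedding.induce (G := G) s).injective).symm

theorem IsCycle.exists_isPath_of_mem_support {c : G.Walk u u} (hc : c.IsCycle) {v : V}
    (hv : v ∈ c.support) : ∃ x z, G.Adj v x ∧ G.Adj v z ∧ x ≠ z ∧
      ∃ p : G.Walk z x, p.IsPath ∧ v ∉ p.support := by
  have hrot := hc.rotate hv
  obtain ⟨x, hvx, p, hp⟩ := not_nil_iff.mp hrot.not_nil
  rw [hp, cons_isCycle_iff] at hrot
  obtain ⟨hpath, hvx_notMem⟩ := hrot
  obtain ⟨z, hvz, q, hq⟩ := not_nil_iff.mp (not_nil_of_ne hvx.ne : ¬ p.reverse.Nil)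
  have hqpath := hpath.reverse
  rw [hq, cons_isPath_iff] at hqpath
  refine ⟨x, z, hvx, hvz, ?_, q, hqpath⟩
  rintro rfl
  have hvx_mem : s(v, x) ∈ p.reverse.edges := by simp [hq]
  exact hvx_notMem (by simpa using hvx_mem)

end Walk

variable {G : SimpleGraph V} {v : V}

theorem induce_le_lcdSub (hind : G.IsIndepSet (G.neighborSet v)) :
    G.induce {u | u ≠ v} ≤ G.lcdSub v := by
  intro x y hxy
  refine ⟨fun h ↦ hxy.ne (Subtype.ext h), Or.inl ⟨hxy, fun ⟨hx, hy⟩ ↦ ?_⟩⟩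
  exact hind hx hy (fun h ↦ hxy.ne (Subtype.ext h)) hxy

theorem lcdSub_adj_of_not_adj {x z : V} (hx : G.Adj v x) (hz : G.Adj v z) (hxz : x ≠ z)
    (h : ¬ G.Adj x z) : (G.lcdSub v).Adj ⟨x, hx.ne'⟩ ⟨z, hz.ne'⟩ :=
  ⟨hxz, Or.inr ⟨⟨hx, hz⟩, h⟩⟩

theorem not_isAcyclic_lcdSub (hind : G.IsIndepSet (G.neighborSet v)) (hG : ¬ G.IsAcyclic) :
    ¬ (G.lcdSub v).IsAcyclic := by
  intro hH
  have hle := induce_le_lcdSub hind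
  obtain ⟨u, c, hc⟩ : ∃ u, ∃ c : G.Walk u u, c.IsCycle := by simpa [IsAcyclic] using hG
  by_cases hv : v ∈ c.support
  · obtain ⟨x, z, hx, hz, hxz, p, hp, hvp⟩ := hc.exists_isPath_of_mem_support hv
    have hpv : ∀ y ∈ p.support, y ∈ {u | u ≠ v} := fun y hy h ↦ hvp (h ▸ hy)
    refine hH _ ((Walk.cons_isCycle_iff _ (lcdSub_adj_of_not_adj hx hz hxz (hind hx hz hxz))).mpr
      ⟨((Walk.isPath_induce_iff p hpv).mpr hp).mapLe hle, fun he ↦ ?_⟩)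
    rw [Walk.edges_mapLe_eq_edges] at he
    exact hind hx hz hxz (induce_adj.mp ((p.induce _ hpv).adj_of_mem_edges he))
  · have hcv : ∀ y ∈ c.support, y ∈ {u | u ≠ v} := fun y hy h ↦ hv (h ▸ hy)
    exact hH _ (((Walk.isCycle_induce_iff c hcv).mpr hc).mapLe hle)

end SimpleGraph

theorem adj_of_lcdSub_isPath_general {V : Type*}
    (G : SimpleGraph V) (hcyc : ¬ G.IsAcyclic)
    (v a b : V) (hN : G.neighborSet v = {a, b})
    (hpath : ∃ n, Nonempty (G.lcdSub v ≃g SimpleGraph.pathGraph n)) :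
    G.Adj a b := by
  by_contra hab
  obtain ⟨n, ⟨f⟩⟩ := hpath
  have hind : G.IsIndepSet (G.neighborSet v) := by
    rw [hN]
    exact Set.pairwise_pair.mpr fun _ ↦ ⟨hab, fun h ↦ hab h.symm⟩
  exact SimpleGraph.not_isAcyclic_lcdSub hind hcyc
    (f.isAcyclic_iff.mpr (SimpleGraph.pathGraph_isAcyclic n))

/-- Case 2.2.2 of Theorem 3.3: let `G` be a connected simple graph on `n ≥ 4`
vertices containing a cycle, and let `v` be a vertex with exactly two neighbours
`a` and `b`.  If `G ⊟ v` is a path, then `a` and `b` are adjacent in `G`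
(so `v, a, b` form a triangle in `G`). -/
theorem adj_of_lcdSub_isPath {V : Type*} [Fintype V] [DecidableEq V]
    (G : SimpleGraph V) (hcard : 4 ≤ Fintype.card V)
    (hconn : G.Connected) (hcyc : ¬ G.IsAcyclic)
    (v a b : V) (hab : a ≠ b) (hN : G.neighborSet v = {a, b})
    (hpath : ∃ n, Nonempty (G.lcdSub v ≃g SimpleGraph.pathGraph n)) :
    G.Adj a b :=
  adj_of_lcdSub_isPath_general G hcyc v a b hN hpath
end
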